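/- arXiv:0807.3578 — 2 statements merged into one kernel-verified Lean document; each statement's English description precedes it below -/
import Mathlib

section
/- Pick integers m, n and linear ℓ, ℓ_1, ℓ_2 ∈ ℂ[X]. If m, n > 1 and X^m ∘ ℓ ∘ X^n = ℓ_1 ∘ X^{mn} ∘ ℓ_2, then ℓ = αX for some α ∈ ℂ^×. If m, n > 2 and T_m ∘ ℓ ∘ T_n = ℓ_1 ∘ T_{mn} ∘ ℓ_2, then ℓ = εX for some ε ∈ {1, −1}. -/
/-!
Compare top coefficients. If `P` has vanishing subleading coefficient (as `X ^ N` and `T_N` do),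
the coefficient of `X ^ (N - 1)` in `P ∘ (d X + e)` is `N · lc P · e · d ^ (N - 1)`, so any
identity forcing it to vanish forces `e = 0`; the coefficient `-N` of `X ^ (N - 2)` in `T_N`
then forces `d ^ 2 = 1`.

In `X ^ m ∘ ℓ ∘ X ^ n` only degrees divisible by `n` occur: degree `mn - 1` kills the translation
part of `ℓ₂`, after which the right side is `c d ^ (mn) X ^ (mn) + f`, and degree `n (m - 1)`
kills that of `ℓ`. For Chebyshev polynomials the coefficients of `(T_m ∘ ℓ) ∘ T_n` above degree
`(m - 1) n` are those of `lc · T_(mn)`, which forces `ℓ₂ = ± X`; by parity `T_(mn) ∘ ℓ₂ = ± T_(mn)`,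
and cancelling `T_n` on the right leaves `T_m ∘ ℓ = λ T_m + μ`, whence `ℓ = ± X` by the same
comparison.
-/

open Polynomial

/-- The normalized degree-`n` Chebyshev polynomial `T_n`, characterized by
`T_n(Y + 1/Y) = Y^n + 1/Y^n`; it is the Dickson polynomial `D_n(X, 1)`
of the first kind. -/
noncomputable def chebT (n : ℕ) : ℂ[X] :=
  Polynomial.dickson 1 (1 : ℂ) n

namespace Polynomial

section CommSemiring

variable {R : Type*} [CommSemiring R]

theorem coeff_taylor_of_natDegree_le {p : R[X]} {N : ℕ} (hp : p.natDegree ≤ N + 1) (r : R) :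
    (taylor r p).coeff N = p.coeff N + (N + 1) * p.coeff (N + 1) * r := by
  have hdeg : (hasseDeriv N p).natDegree < 2 := by
    have := natDegree_hasseDeriv_le p N
    omega
  rw [taylor_coeff, eval_eq_sum_range' hdeg, Finset.sum_range_succ, Finset.sum_range_one,
    hasseDeriv_coeff, hasseDeriv_coeff, zero_add, Nat.choose_self, add_comm 1 N,
    Nat.choose_succ_self_right]
  push_cast
  ring

theorem coeff_comp_C_mul_X_add_C_of_natDegree_le {p : R[X]} {N : ℕ}
    (hp : p.natDegree ≤ N + 1) (d e : R) :
    (p.comp (C d * X + C e)).coeff N = (p.coeff N + (N + 1) * p.coeff (N + 1) * e) * d ^ N := by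
  have : C d * X + C e = (X + C e).comp (C d * X) := by simp
  rw [this, ← comp_assoc, ← taylor_apply, comp_C_mul_X_coeff, coeff_taylor_of_natDegree_le hp]

theorem coeff_comp_eq_leadingCoeff_mul_coeff_pow (p q : R[X]) {k : ℕ}
    (hk : (p.natDegree - 1) * q.natDegree < k) :
    (p.comp q).coeff k = p.leadingCoeff * (q ^ p.natDegree).coeff k := by
  rw [comp_eq_sum_left, Polynomial.sum_def, finsetSum_coeff,
    Finset.sum_eq_single p.natDegree]
  · rw [coeff_C_mul, leadingCoeff]
  · intro i hi hne
    have hlt : (q ^ i).natDegree < k :=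
      natDegree_pow_le.trans_lt <| (Nat.mul_le_mul_right _
        (by have := le_natDegree_of_mem_supp i hi; omega)).trans_lt hk
    rw [coeff_C_mul, coeff_eq_zero_of_natDegree_lt hlt, mul_zero]
  · intro h
    rw [notMem_support_iff.mp h, map_zero, zero_mul, coeff_zero]

theorem coeff_C_mul_X_add_C_comp {j : ℕ} (hj : j ≠ 0) (c f : R) (p : R[X]) :
    ((C c * X + C f).comp p).coeff j = c * p.coeff j := by
  simp [coeff_C, hj]

end CommSemiring

section Domain

variable {R : Type*} [CommRing R] [IsDomain R]

theorem eq_zero_of_coeff_comp_C_mul_X_add_C_eq_zero [CharZero R] {p : R[X]} {N : ℕ}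
    (hp : p.natDegree = N + 1) (hpN : p.coeff N = 0) {d e : R} (hd : d ≠ 0)
    (h : (p.comp (C d * X + C e)).coeff N = 0) : e = 0 := by
  rw [coeff_comp_C_mul_X_add_C_of_natDegree_le hp.le, hpN, zero_add, ← hp,
    ← leadingCoeff] at h
  have hlc : p.leadingCoeff ≠ 0 := by
    rw [Ne, leadingCoeff_eq_zero]; rintro rfl; simp at hp
  simpa [hlc, hd, Nat.cast_add_one_ne_zero] using h

theorem sq_eq_one_of_coeff_comp_C_mul_X {p : R[X]} {k : ℕ} (hpk : p.coeff k ≠ 0) {d : R}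
    (hd : d ≠ 0) (h : (p.comp (C d * X)).coeff k = d ^ (k + 2) * p.coeff k) : d ^ 2 = 1 := by
  rw [comp_C_mul_X_coeff, pow_add, mul_comm, mul_assoc] at h
  have := mul_left_cancel₀ (pow_ne_zero k hd) h
  exact (mul_eq_right₀ hpk).mp this.symm

theorem eq_of_comp_eq_comp {p₁ p₂ q : R[X]} (hq : q.natDegree ≠ 0)
    (h : p₁.comp q = p₂.comp q) : p₁ = p₂ := by
  rw [← sub_eq_zero, ← sub_comp, comp_eq_zero_iff] at h
  rcases h with h | ⟨-, hq'⟩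
  · exact sub_eq_zero.mp h
  · exact absurd (congrArg natDegree hq') (by rwa [natDegree_C])

end Domain

end Polynomial

theorem chebT_zero : chebT 0 = 2 := by
  norm_num [chebT]

theorem chebT_one : chebT 1 = X := by
  simp [chebT]

theorem chebT_add_two (k : ℕ) : chebT (k + 2) = X * chebT (k + 1) - chebT k := by
  simp [chebT, dickson_add_two]

theorem chebT_mul (m n : ℕ) : chebT (m * n) = (chebT m).comp (chebT n) :=
  dickson_one_one_mul (R := ℂ) m n

theorem exists_chebT_add_two_eq (k : ℕ) : ∃ r : ℂ[X],
    chebT (k + 2) = X ^ (k + 2) - C ((k : ℂ) + 2) * X ^ k + r ∧ r.degree < k := by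
  induction k using Nat.twoStepInduction with
  | zero => exact ⟨0, by simp [chebT_add_two, chebT_one, chebT_zero, C_ofNat]; ring, by simp⟩
  | one => exact ⟨0, by simp [chebT_add_two, chebT_one, chebT_zero, C_ofNat]; ring, by simp⟩
  | more k ih₀ ih₁ =>
    obtain ⟨r₀, hr₀, hdeg₀⟩ := ih₀
    obtain ⟨r₁, hr₁, hdeg₁⟩ := ih₁
    refine ⟨X * r₁ + C ((k : ℂ) + 2) * X ^ k - r₀, ?_, ?_⟩
    · rw [chebT_add_two, hr₁, hr₀]
      push_cast
      simp only [map_add, map_one, map_ofNat]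
      ring
    · have hX : (X * r₁).degree < ↑(k + 2) := by
        rw [mul_comm, degree_mul_X, show ((k + 2 : ℕ) : WithBot ℕ) = ↑(k + 1) + 1 by norm_cast]
        exact WithBot.add_lt_add_right (by simp) hdeg₁
      have hC : (C ((k : ℂ) + 2) * X ^ k).degree < ↑(k + 2) :=
        (degree_C_mul_X_pow_le _ _).trans_lt (by exact_mod_cast (by omega : k < k + 2))
      have h₀ : r₀.degree < ↑(k + 2) := hdeg₀.trans (by exact_mod_cast (by omega : k < k + 2))
      exact (degree_sub_le _ _).trans_lt (max_lt ((degree_add_le _ _).trans_lt (max_lt hX hC)) h₀)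

theorem degree_chebT_add_two (k : ℕ) : (chebT (k + 2)).degree = ↑(k + 2) := by
  obtain ⟨r, hr, hdeg⟩ := exists_chebT_add_two_eq k
  have hC : (C ((k : ℂ) + 2) * X ^ k).degree < ↑(k + 2) :=
    (degree_C_mul_X_pow_le _ _).trans_lt (by exact_mod_cast (by omega : k < k + 2))
  have hlead : (X ^ (k + 2) - C ((k : ℂ) + 2) * X ^ k).degree = ↑(k + 2) := by
    rw [degree_sub_eq_left_of_degree_lt (by rwa [degree_X_pow]), degree_X_pow]
  rw [hr, degree_add_eq_left_of_degree_lt, hlead]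
  exact hlead ▸ hdeg.trans (by exact_mod_cast (by omega : k < k + 2))

theorem natDegree_chebT (k : ℕ) : (chebT k).natDegree = k := by
  match k with
  | 0 => simp [chebT_zero]
  | 1 => simp [chebT_one]
  | k + 2 => exact natDegree_eq_of_degree_eq_some (degree_chebT_add_two k)

theorem coeff_chebT_add_two_self (k : ℕ) : (chebT (k + 2)).coeff (k + 2) = 1 := by
  obtain ⟨r, hr, hdeg⟩ := exists_chebT_add_two_eq k
  rw [hr, coeff_add, coeff_sub, coeff_X_pow_self, coeff_C_mul_X_pow, if_neg (by omega),
    coeff_eq_zero_of_degree_lt (hdeg.trans (by exact_mod_cast (by omega : k < k + 2)))]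
  ring

theorem coeff_chebT_add_two_succ (k : ℕ) : (chebT (k + 2)).coeff (k + 1) = 0 := by
  obtain ⟨r, hr, hdeg⟩ := exists_chebT_add_two_eq k
  rw [hr, coeff_add, coeff_sub, coeff_X_pow, if_neg (by omega), coeff_C_mul_X_pow,
    if_neg (by omega),
    coeff_eq_zero_of_degree_lt (hdeg.trans (by exact_mod_cast (by omega : k < k + 1)))]
  ring

theorem coeff_chebT_add_two (k : ℕ) : (chebT (k + 2)).coeff k = -((k : ℂ) + 2) := by
  obtain ⟨r, hr, hdeg⟩ := exists_chebT_add_two_eq k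
  rw [hr, coeff_add, coeff_sub, coeff_X_pow, if_neg (by omega), coeff_C_mul_X_pow,
    if_pos rfl, coeff_eq_zero_of_degree_lt hdeg]
  ring

theorem monic_chebT {k : ℕ} (hk : k ≠ 0) : (chebT k).Monic := by
  rw [Monic, leadingCoeff, natDegree_chebT]
  match k, hk with
  | 1, _ => simp [chebT_one]
  | k + 2, _ => exact coeff_chebT_add_two_self k

theorem chebT_comp_C_mul_X {d : ℂ} (hd : d ^ 2 = 1) (k : ℕ) :
    (chebT k).comp (C d * X) = C (d ^ k) * chebT k := by
  induction k using Nat.twoStepInduction with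
  | zero => simp [chebT_zero]
  | one => simp [chebT_one]
  | more k ih₀ ih₁ =>
    rw [chebT_add_two, sub_comp, mul_comp, X_comp, ih₀, ih₁,
      show d ^ (k + 2) = d ^ k by rw [pow_add, hd, mul_one], pow_succ]
    have hC : C d * C d = 1 := by rw [← C_mul, ← sq, hd, C_1]
    simp only [map_mul]
    linear_combination (C (d ^ k) * X * chebT (k + 1)) * hC

theorem coeff_comp_chebT {p : ℂ[X]} (hp : p.natDegree ≠ 0) {n j : ℕ}
    (hj : (p.natDegree - 1) * n < j) :
    (p.comp (chebT n)).coeff j = p.leadingCoeff * (chebT (p.natDegree * n)).coeff j := by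
  rw [chebT_mul, coeff_comp_eq_leadingCoeff_mul_coeff_pow _ _ (by rwa [natDegree_chebT]),
    coeff_comp_eq_leadingCoeff_mul_coeff_pow _ _ (by rwa [natDegree_chebT, natDegree_chebT]),
    natDegree_chebT, (monic_chebT hp).leadingCoeff, one_mul]

theorem eq_zero_and_sq_eq_one_of_coeff_chebT_comp {k : ℕ} {d e t : ℂ} (hd : d ≠ 0)
    (h : ∀ j, k ≤ j →
      ((chebT (k + 2)).comp (C d * X + C e)).coeff j = t * (chebT (k + 2)).coeff j) :
    e = 0 ∧ d ^ 2 = 1 := by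
  have ht : t = d ^ (k + 2) := by
    have := h (k + 2) (by omega)
    rwa [coeff_comp_C_mul_X_add_C_of_natDegree_le (by rw [natDegree_chebT]; omega),
      coeff_chebT_add_two_self, coeff_eq_zero_of_natDegree_lt (by rw [natDegree_chebT]; omega),
      mul_zero, zero_mul, add_zero, one_mul, mul_one, eq_comm] at this
  subst ht
  have he : e = 0 :=
    eq_zero_of_coeff_comp_C_mul_X_add_C_eq_zero (natDegree_chebT _)
      (coeff_chebT_add_two_succ k) hd
      (by rw [h _ (by omega), coeff_chebT_add_two_succ, mul_zero])
  subst he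
  refine ⟨rfl, sq_eq_one_of_coeff_comp_C_mul_X (p := chebT (k + 2)) (k := k) ?_ hd ?_⟩
  · rw [coeff_chebT_add_two, neg_ne_zero]
    exact_mod_cast (by omega : k + 2 ≠ 0)
  · simpa only [map_zero, add_zero] using h k le_rfl

theorem exists_eq_C_mul_X_of_X_pow_comp_comp_X_pow_eq {m n : ℕ} (hm : 1 < m) (hn : 1 < n)
    {ℓ ℓ₁ ℓ₂ : ℂ[X]} (hℓ : ℓ.natDegree = 1) (hℓ₁ : ℓ₁.natDegree = 1) (hℓ₂ : ℓ₂.natDegree = 1)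
    (h : (X ^ m).comp (ℓ.comp (X ^ n)) = ℓ₁.comp ((X ^ (m * n)).comp ℓ₂)) :
    ∃ α : ℂ, α ≠ 0 ∧ ℓ = C α * X := by
  obtain ⟨a, ha, b, rfl⟩ := natDegree_eq_one.mp hℓ
  obtain ⟨c, hc, f, rfl⟩ := natDegree_eq_one.mp hℓ₁
  obtain ⟨d, hd, e, rfl⟩ := natDegree_eq_one.mp hℓ₂
  rw [← comp_assoc, ← expand_eq_comp_X_pow] at h
  obtain ⟨M, rfl⟩ : ∃ M, m = M + 1 := ⟨m - 1, by omega⟩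
  have hmn : 2 * n ≤ (M + 1) * n := Nat.mul_le_mul_right n (by omega)
  obtain ⟨K, hK⟩ := Nat.exists_eq_add_one.mpr (by omega : 0 < (M + 1) * n)
  have hcoeff : ∀ j, j ≠ 0 → (expand ℂ n ((X ^ (M + 1)).comp (C a * X + C b))).coeff j =
      c * ((X ^ (K + 1)).comp (C d * X + C e)).coeff j := fun j hj => by
    rw [h, coeff_C_mul_X_add_C_comp hj, hK]
  have he : e = 0 := by
    have hndvd : ¬ n ∣ K := fun hdvd => absurd
      (Nat.le_of_dvd one_pos ((Nat.dvd_add_right hdvd).mp (hK ▸ dvd_mul_left n (M + 1))))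
      (by omega)
    have hcoeffK := hcoeff K (by omega)
    rw [coeff_expand (by omega), if_neg hndvd, eq_comm, mul_eq_zero_iff_left hc] at hcoeffK
    exact eq_zero_of_coeff_comp_C_mul_X_add_C_eq_zero (natDegree_X_pow _)
      (by rw [coeff_X_pow, if_neg (by omega)]) hd hcoeffK
  subst he
  have hb : b = 0 := by
    have hsucc : (M + 1) * n = M * n + n := by ring
    have hcoeffMn := hcoeff (M * n) (Nat.mul_ne_zero (by omega) (by omega))
    rw [coeff_expand_mul (by omega), map_zero, add_zero, comp_C_mul_X_coeff, coeff_X_pow,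
      if_neg (by omega), zero_mul, mul_zero] at hcoeffMn
    exact eq_zero_of_coeff_comp_C_mul_X_add_C_eq_zero (natDegree_X_pow _)
      (by rw [coeff_X_pow, if_neg (by omega)]) ha hcoeffMn
  exact ⟨a, ha, by rw [hb, map_zero, add_zero]⟩

theorem exists_chebT_comp_eq_of_chebT_comp_comp_chebT_eq {m n : ℕ} (hm : m ≠ 0) (hn : 2 < n)
    {ℓ ℓ₁ ℓ₂ : ℂ[X]} (hℓ : ℓ.natDegree = 1) (hℓ₁ : ℓ₁.natDegree = 1) (hℓ₂ : ℓ₂.natDegree = 1)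
    (h : (chebT m).comp (ℓ.comp (chebT n)) = ℓ₁.comp ((chebT (m * n)).comp ℓ₂)) :
    ∃ s t : ℂ, (chebT m).comp ℓ = C s * chebT m + C t := by
  obtain ⟨c, hc, f, rfl⟩ := natDegree_eq_one.mp hℓ₁
  obtain ⟨d, hd, e, rfl⟩ := natDegree_eq_one.mp hℓ₂
  have hL : ((chebT m).comp ℓ).natDegree = m := by
    rw [natDegree_comp, natDegree_chebT, hℓ, mul_one]
  obtain ⟨M, rfl⟩ : ∃ M, m = M + 1 := ⟨m - 1, by omega⟩
  obtain ⟨k, hk⟩ := Nat.exists_eq_add_one.mpr (by omega : 0 < M * n + n - 1)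
  have hmn : (M + 1) * n = k + 2 := by rw [add_one_mul]; omega
  have htop : ∀ j, k ≤ j → ((chebT (M + 1)).comp ℓ).leadingCoeff * (chebT (k + 2)).coeff j =
      c * ((chebT (k + 2)).comp (C d * X + C e)).coeff j := fun j hj => by
    have hcoeff := coeff_comp_chebT (p := (chebT (M + 1)).comp ℓ) (n := n) (j := j)
      (by omega) (by rw [hL, Nat.add_sub_cancel]; omega)
    rw [hL, hmn] at hcoeff
    rw [← hcoeff, comp_assoc, h, hmn, coeff_C_mul_X_add_C_comp (by omega)]
  obtain ⟨rfl, hd2⟩ := eq_zero_and_sq_eq_one_of_coeff_chebT_comp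
    (t := ((chebT (M + 1)).comp ℓ).leadingCoeff / c) hd fun j hj => by
      rw [div_mul_eq_mul_div, eq_div_iff hc, mul_comm, htop j hj]
  refine ⟨c * d ^ ((M + 1) * n), f,
    eq_of_comp_eq_comp (q := chebT n) (by rw [natDegree_chebT]; omega) ?_⟩
  rw [comp_assoc, h, map_zero, add_zero, chebT_comp_C_mul_X hd2, chebT_mul]
  simp only [add_comp, mul_comp, C_comp, X_comp, map_mul]
  ring

theorem eq_X_or_eq_neg_X_of_chebT_comp_comp_chebT_eq {m n : ℕ} (hm : 2 < m) (hn : 2 < n)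
    {ℓ ℓ₁ ℓ₂ : ℂ[X]} (hℓ : ℓ.natDegree = 1) (hℓ₁ : ℓ₁.natDegree = 1) (hℓ₂ : ℓ₂.natDegree = 1)
    (h : (chebT m).comp (ℓ.comp (chebT n)) = ℓ₁.comp ((chebT (m * n)).comp ℓ₂)) :
    ℓ = X ∨ ℓ = -X := by
  obtain ⟨s, t, hst⟩ :=
    exists_chebT_comp_eq_of_chebT_comp_comp_chebT_eq (by omega) hn hℓ hℓ₁ hℓ₂ h
  obtain ⟨a, ha, b, rfl⟩ := natDegree_eq_one.mp hℓ
  obtain ⟨k, rfl⟩ : ∃ k, m = k + 2 := ⟨m - 2, by omega⟩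
  obtain ⟨rfl, ha2⟩ := eq_zero_and_sq_eq_one_of_coeff_chebT_comp (t := s) ha fun j hj => by
    rw [hst, coeff_add, coeff_C_mul, coeff_C, if_neg (by omega), add_zero]
  rcases sq_eq_one_iff.mp ha2 with rfl | rfl <;> simp

theorem middle_linear_is_scalar
    (m n : ℕ) (ℓ ℓ₁ ℓ₂ : ℂ[X])
    (hℓ : ℓ.natDegree = 1) (hℓ₁ : ℓ₁.natDegree = 1) (hℓ₂ : ℓ₂.natDegree = 1) :
    (1 < m → 1 < n →
      (Polynomial.X ^ m).comp (ℓ.comp (Polynomial.X ^ n)) =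
        ℓ₁.comp ((Polynomial.X ^ (m * n)).comp ℓ₂) →
      ∃ α : ℂ, α ≠ 0 ∧ ℓ = Polynomial.C α * Polynomial.X) ∧
    (2 < m → 2 < n →
      (chebT m).comp (ℓ.comp (chebT n)) = ℓ₁.comp ((chebT (m * n)).comp ℓ₂) →
      ℓ = Polynomial.X ∨ ℓ = -Polynomial.X) :=
  ⟨fun hm hn h => exists_eq_C_mul_X_of_X_pow_comp_comp_X_pow_eq hm hn hℓ hℓ₁ hℓ₂ h,
    fun hm hn h => eq_X_or_eq_neg_X_of_chebT_comp_comp_chebT_eq hm hn hℓ hℓ₁ hℓ₂ h⟩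
end

section
/- Let f, g ∈ ℂ[X] be nonconstant and n > 1 an integer. Then f ∘ g is a polynomial in X^n (i.e., f ∘ g = F ∘ X^n for some F ∈ ℂ[X]) if and only if there exist an integer s ≥ 0, polynomials f̂, ĝ ∈ ℂ[X], and a linear ℓ ∈ ℂ[X] such that f = f̂(X^{n/gcd(n,s)}) ∘ ℓ^{-1} and g = ℓ ∘ X^s·ĝ(X^n). -/
/-!
If `f ∘ g = F ∘ Xⁿ`, then `f ∘ g` is invariant under `X ↦ ζ X` for a primitive `n`-th root of
unity `ζ`, so `f ∘ u = f ∘ g` with `u = g(ζ X)`. Completing the `k`-th power of `f`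
(`f = a (X + c)ᵏ + r` with `deg r < k - 1`, `k = deg f`) turns this into
`a (w₁ᵏ - w₂ᵏ) = r ∘ g - r ∘ u` with `w₁ = u + c`, `w₂ = ζᵐ (g + c)`, `m = deg g`; the right
side has degree `< (k - 1) m`, which forces `w₁ = w₂`. Hence `g + c` is an eigenvector of
`X ↦ ζ X` with eigenvalue `ζᵐ`, so its exponents are all `≡ m (mod n)`:
`g + c = X^s ĝ(Xⁿ)` with `s = m mod n`. Then `f₁ = f(X - c)` satisfies `f₁(ζᵐ X) = f₁`, and `ζᵐ`
is a primitive `n / gcd(n, s)`-th root of unity, so `f₁` is a polynomial in `X^(n / gcd(n, s))`.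
The converse holds because `(X^s ĝ(Xⁿ))^(n / gcd(n, s))` is a polynomial in `Xⁿ`.
-/

open Polynomial

theorem IsPrimitiveRoot.pow_div_gcd {M : Type*} [CommMonoid M] {ζ : M} {n m : ℕ}
    (hζ : IsPrimitiveRoot ζ n) (hm : m ≠ 0) : IsPrimitiveRoot (ζ ^ m) (n / n.gcd m) := by
  rw [IsPrimitiveRoot.iff_orderOf, orderOf_pow' ζ hm, ← hζ.eq_orderOf]

namespace Polynomial

section Semiring

variable {R : Type*} [Semiring R]

theorem degree_comp_lt {r w : R[X]} {j : ℕ} (hr : r.degree < j) (hw : 0 < w.natDegree) :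
    (r.comp w).degree < (j * w.natDegree : ℕ) := by
  rcases eq_or_ne r 0 with rfl | hr0
  · rw [zero_comp, degree_zero]
    exact WithBot.bot_lt_coe _
  have hrj : r.natDegree < j := (natDegree_lt_iff_degree_lt hr0).2 hr
  calc (r.comp w).degree ≤ (r.comp w).natDegree := degree_le_natDegree
    _ ≤ (r.natDegree * w.natDegree : ℕ) := by exact_mod_cast natDegree_comp_le
    _ < (j * w.natDegree : ℕ) := by exact_mod_cast Nat.mul_lt_mul_of_pos_right hrj hw

end Semiring

section CommSemiring

variable {R : Type*} [CommSemiring R]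

theorem exists_eq_X_pow_mul_comp_X_pow {p : R[X]} {n m : ℕ} (hn : 0 < n)
    (hp : ∀ i, p.coeff i ≠ 0 → i ≡ m [MOD n]) :
    ∃ q : R[X], p = X ^ (m % n) * q.comp (X ^ n) := by
  obtain ⟨r, rfl⟩ : X ^ (m % n) ∣ p := X_pow_dvd_iff.2 fun d hd => by
    by_contra h
    exact hd.not_ge (hp d h ▸ Nat.mod_le d n)
  refine ⟨contract n r, congrArg _ (ext fun i => ?_)⟩
  rw [← expand_eq_comp_X_pow, coeff_expand hn, coeff_contract hn.ne']
  split_ifs with h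
  · rw [Nat.div_mul_cancel h]
  · by_contra hi
    have hmod : m % n + i ≡ m % n + 0 [MOD n] := by
      have := hp (i + m % n) (by rwa [coeff_X_pow_mul])
      rw [add_comm] at this
      exact this.trans (Nat.mod_modEq m n).symm
    exact h (Nat.modEq_zero_iff_dvd.1 (hmod.add_left_cancel' _))

theorem X_pow_mul_comp_X_pow_pow_div_gcd (q : R[X]) (n s : ℕ) :
    (X ^ s * q.comp (X ^ n)) ^ (n / n.gcd s) =
      (X ^ (s / n.gcd s) * q ^ (n / n.gcd s)).comp (X ^ n) := by
  have hexp : s * (n / n.gcd s) = n * (s / n.gcd s) := by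
    rw [← Nat.mul_div_assoc s (Nat.gcd_dvd_left n s),
      ← Nat.mul_div_assoc n (Nat.gcd_dvd_right n s), mul_comm]
  rw [mul_pow, ← pow_mul, hexp, mul_comp, X_pow_comp, ← pow_mul, pow_comp]

end CommSemiring

section Domain

variable {R : Type*} [CommRing R] [IsDomain R]

theorem natDegree_eq_of_comp_eq {f u v : R[X]} (hf : 0 < f.natDegree)
    (H : f.comp u = f.comp v) : u.natDegree = v.natDegree := by
  have := congrArg natDegree H
  rwa [natDegree_comp, natDegree_comp, Nat.mul_right_inj hf.ne'] at this

theorem comp_left_injective {h : R[X]} (hh : 0 < h.natDegree) :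
    Function.Injective fun p : R[X] => p.comp h := by
  intro p q hpq
  have hcomp : (p - q).comp h = 0 := by
    rw [sub_comp, sub_eq_zero]
    exact hpq
  rcases comp_eq_zero_iff.1 hcomp with hpq | ⟨-, hC⟩
  · exact sub_eq_zero.1 hpq
  · rw [hC, natDegree_C] at hh
    exact absurd hh (lt_irrefl 0)

theorem comp_C_mul_X_eq_self_of_comp {p h : R[X]} {z w : R} (hh : 0 < h.natDegree)
    (hp : (p.comp h).comp (C z * X) = p.comp h) (hw : h.comp (C z * X) = C w * h) :
    p.comp (C w * X) = p :=
  comp_left_injective hh <| by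
    simp only [comp_assoc, mul_comp, C_comp, X_comp, ← hw]
    rw [← comp_assoc, hp]

theorem exists_eq_X_pow_mul_comp_X_pow_of_comp_C_mul_X {ζ : R} {n m : ℕ}
    (hζ : IsPrimitiveRoot ζ n) (hn : 0 < n) {p : R[X]} (hp : p.comp (C ζ * X) = C (ζ ^ m) * p) :
    ∃ q : R[X], p = X ^ (m % n) * q.comp (X ^ n) :=
  exists_eq_X_pow_mul_comp_X_pow hn fun i hi => by
    have hcoeff := congrArg (coeff · i) hp
    simp only [comp_C_mul_X_coeff, coeff_C_mul] at hcoeff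
    rw [Nat.ModEq, hζ.eq_orderOf, ← (hζ.isOfFinOrder hn.ne').pow_inj_mod]
    exact mul_left_cancel₀ hi (hcoeff.trans (mul_comm _ _))

theorem eq_of_degree_pow_sub_pow_lt [CharZero R] {w₁ w₂ : R[X]} {k : ℕ} (hk : 0 < k)
    (hdeg : w₁.natDegree = w₂.natDegree) (hlc : w₁.leadingCoeff = w₂.leadingCoeff)
    (h : (w₁ ^ k - w₂ ^ k).degree < ((k - 1) * w₁.natDegree : ℕ)) : w₁ = w₂ := by
  by_contra hne
  have hw₁ : w₁ ≠ 0 := fun h₁ => hne <| by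
    rw [h₁, leadingCoeff_zero, eq_comm, leadingCoeff_eq_zero] at hlc
    rw [h₁, hlc]
  have hw₂ : w₂ ≠ 0 := by rwa [← leadingCoeff_ne_zero, ← hlc, leadingCoeff_ne_zero]
  set N := (k - 1) * w₁.natDegree
  -- `w₁ᵏ - w₂ᵏ = S * (w₁ - w₂)`, and all `k` terms of `S` have degree `N` and the same
  -- leading coefficient, so `S` has degree `N`.
  set S := ∑ i ∈ Finset.range k, w₁ ^ i * w₂ ^ (k - 1 - i)
  have hterm : ∀ i ∈ Finset.range k,
      (w₁ ^ i * w₂ ^ (k - 1 - i)).coeff N = w₁.leadingCoeff ^ (k - 1) := fun i hi => by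
    have hik : i + (k - 1 - i) = k - 1 := by
      have := Finset.mem_range.1 hi
      omega
    have hN : (w₁ ^ i * w₂ ^ (k - 1 - i)).natDegree = N := by
      rw [natDegree_mul (pow_ne_zero _ hw₁) (pow_ne_zero _ hw₂), natDegree_pow, natDegree_pow,
        ← hdeg, ← add_mul, hik]
    rw [← hN, coeff_natDegree, leadingCoeff_mul, leadingCoeff_pow, leadingCoeff_pow, ← hlc,
      ← pow_add, hik]
  have hS : S.coeff N ≠ 0 := by
    rw [finsetSum_coeff, Finset.sum_congr rfl hterm, Finset.sum_const, Finset.card_range,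
      nsmul_eq_mul]
    exact mul_ne_zero (Nat.cast_ne_zero.2 hk.ne') (pow_ne_zero _ (leadingCoeff_ne_zero.2 hw₁))
  rw [← geom_sum₂_mul, degree_mul] at h
  have hle : (N : WithBot ℕ) ≤ S.degree + (w₁ - w₂).degree :=
    (le_degree_of_ne_zero hS).trans
      (le_add_of_nonneg_right (zero_le_degree_iff.2 (sub_ne_zero.2 hne)))
  exact hle.not_gt h

end Domain

section Field

variable {K : Type*} [Field K] [CharZero K]

theorem exists_degree_sub_C_mul_X_add_C_pow_lt {f : K[X]} (hf : 0 < f.natDegree) :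
    ∃ c : K, (f - C f.leadingCoeff * (X + C c) ^ f.natDegree).degree <
      ((f.natDegree - 1 : ℕ) : WithBot ℕ) := by
  set k := f.natDegree
  set a := f.leadingCoeff
  have hak : a * k ≠ 0 :=
    mul_ne_zero (leadingCoeff_ne_zero.2 (ne_zero_of_natDegree_gt hf)) (Nat.cast_ne_zero.2 hf.ne')
  refine ⟨f.coeff (k - 1) / (a * k), (degree_lt_iff_coeff_zero _ _).2 fun j hj => ?_⟩
  have hj : k - 1 ≤ j := by exact_mod_cast hj
  rw [coeff_sub, coeff_C_mul, coeff_X_add_C_pow, sub_eq_zero]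
  rcases lt_trichotomy j k with hjk | rfl | hjk
  · obtain rfl : j = k - 1 := by omega
    rw [show k - (k - 1) = 1 by omega, Nat.choose_symm_of_eq_add (show k = k - 1 + 1 by omega),
      Nat.choose_one_right, pow_one, ← mul_assoc, mul_comm a, mul_assoc, div_mul_cancel₀ _ hak]
  · simp [a, k]
  · rw [coeff_eq_zero_of_natDegree_lt hjk, Nat.choose_eq_zero_of_lt hjk]
    simp

theorem exists_add_C_eq_C_mul_add_C_of_comp_eq {f u v : K[X]} {ε : K} (hf : 0 < f.natDegree)
    (hv : 0 < v.natDegree) (hlc : u.leadingCoeff = ε * v.leadingCoeff)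
    (H : f.comp u = f.comp v) : ∃ c : K, u + C c = C ε * (v + C c) := by
  set k := f.natDegree
  set a := f.leadingCoeff
  have ha : a ≠ 0 := leadingCoeff_ne_zero.2 (ne_zero_of_natDegree_gt hf)
  have hdeg : u.natDegree = v.natDegree := natDegree_eq_of_comp_eq hf H
  have hε : ε ^ k = 1 := by
    have := congrArg leadingCoeff H
    rw [leadingCoeff_comp (hdeg ▸ hv.ne'), leadingCoeff_comp hv.ne', hlc, mul_pow] at this
    refine mul_left_cancel₀ (mul_ne_zero ha (pow_ne_zero k (leadingCoeff_ne_zero.2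
      (ne_zero_of_natDegree_gt hv)))) ?_
    linear_combination this
  obtain ⟨c, hr⟩ := exists_degree_sub_C_mul_X_add_C_pow_lt hf
  set r := f - C a * (X + C c) ^ k
  have hcomp : ∀ w, f.comp w = C a * (w + C c) ^ k + r.comp w := fun w => by
    simp only [r, sub_comp, mul_comp, C_comp, pow_comp, add_comp, X_comp]
    ring
  have hlc_add : ∀ w : K[X], 0 < w.natDegree → (w + C c).leadingCoeff = w.leadingCoeff :=
    fun w hw => leadingCoeff_add_of_degree_lt'
      (degree_C_le.trans_lt (natDegree_pos_iff_degree_pos.1 hw))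
  refine ⟨c, eq_of_degree_pow_sub_pow_lt hf (k := k) ?_ ?_ ?_⟩
  · rw [natDegree_add_C, natDegree_C_mul (by rintro rfl; simp [zero_pow hf.ne'] at hε),
      natDegree_add_C, hdeg]
  · rw [leadingCoeff_mul, leadingCoeff_C, hlc_add u (hdeg ▸ hv), hlc_add v hv, hlc]
  · have key : C a * ((u + C c) ^ k - (C ε * (v + C c)) ^ k) = r.comp v - r.comp u := by
      rw [mul_pow, ← C_pow, hε, C_1, one_mul]
      linear_combination (hcomp u).symm.trans (H.trans (hcomp v))
    rw [← degree_C_mul ha, key, natDegree_add_C, hdeg]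
    refine (degree_sub_le _ _).trans_lt (max_lt (degree_comp_lt hr hv) ?_)
    rw [← hdeg]
    exact degree_comp_lt hr (hdeg ▸ hv)

theorem exists_add_C_comp_C_mul_X_eq {f g : K[X]} {ζ : K} (hf : 0 < f.natDegree)
    (hg : 0 < g.natDegree) (hζ : ζ ≠ 0) (H : (f.comp g).comp (C ζ * X) = f.comp g) :
    ∃ c : K, (g + C c).comp (C ζ * X) = C (ζ ^ g.natDegree) * (g + C c) := by
  have hσ : (C ζ * X).natDegree ≠ 0 := by rw [natDegree_C_mul_X ζ hζ]; exact one_ne_zero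
  obtain ⟨c, hc⟩ := exists_add_C_eq_C_mul_add_C_of_comp_eq hf hg (u := g.comp (C ζ * X))
    (by rw [leadingCoeff_comp hσ, leadingCoeff_C_mul_X, mul_comm]) (by rwa [← comp_assoc])
  exact ⟨c, by rw [add_comp, C_comp, hc]⟩

end Field

end Polynomial

theorem comp_in_Xn_iff
    (f g : ℂ[X]) (hf : 0 < f.natDegree) (hg : 0 < g.natDegree)
    (n : ℕ) (hn : 1 < n) :
    (∃ F : ℂ[X], f.comp g = F.comp (Polynomial.X ^ n)) ↔
    ∃ (s : ℕ) (fhat ghat ℓ ℓinv : ℂ[X]),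
      ℓ.natDegree = 1 ∧ ℓ.comp ℓinv = Polynomial.X ∧ ℓinv.comp ℓ = Polynomial.X ∧
      f = (fhat.comp (Polynomial.X ^ (n / Nat.gcd n s))).comp ℓinv ∧
      g = ℓ.comp (Polynomial.X ^ s * ghat.comp (Polynomial.X ^ n)) := by
  constructor
  · rintro ⟨F, hF⟩
    have hn0 : 0 < n := by omega
    obtain ⟨ζ, hζ⟩ : ∃ ζ : ℂ, IsPrimitiveRoot ζ n := ⟨_, Complex.isPrimitiveRoot_exp n hn0.ne'⟩
    have hinv : (f.comp g).comp (C ζ * X) = f.comp g := by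
      rw [hF, comp_assoc, X_pow_comp, mul_pow, ← C_pow, hζ.pow_eq_one, C_1, one_mul]
    obtain ⟨c, hc⟩ := exists_add_C_comp_C_mul_X_eq hf hg (hζ.ne_zero hn0.ne') hinv
    obtain ⟨ghat, hghat⟩ := exists_eq_X_pow_mul_comp_X_pow_of_comp_C_mul_X hζ hn0 hc
    have hshift : (f.comp (X - C c)).comp (g + C c) = f.comp g := by
      rw [comp_assoc, sub_comp, X_comp, C_comp, add_sub_cancel_right]
    have hf₁ := comp_C_mul_X_eq_self_of_comp (by rwa [natDegree_add_C]) (hshift ▸ hinv) hc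
    obtain ⟨fhat, hfhat⟩ := exists_eq_X_pow_mul_comp_X_pow_of_comp_C_mul_X (m := 0)
      (hζ.pow_div_gcd hg.ne') (Nat.div_pos (Nat.gcd_le_left _ hn0) (Nat.gcd_pos_of_pos_left _ hn0))
      (by rwa [pow_zero, C_1, one_mul])
    rw [Nat.zero_mod, pow_zero, one_mul] at hfhat
    refine ⟨g.natDegree % n, fhat, ghat, X - C c, X + C c, natDegree_X_sub_C c, by simp, by simp,
      ?_, by rw [← hghat, sub_comp, X_comp, C_comp, add_sub_cancel_right]⟩
    rw [Nat.gcd_comm, ← Nat.gcd_rec, ← hfhat, comp_assoc, sub_comp, X_comp, C_comp,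
      add_sub_cancel_right, comp_X]
  · rintro ⟨s, fhat, ghat, ℓ, ℓinv, -, -, hℓ, rfl, rfl⟩
    refine ⟨fhat.comp (X ^ (s / n.gcd s) * ghat ^ (n / n.gcd s)), ?_⟩
    rw [comp_assoc, comp_assoc, ← comp_assoc ℓinv, hℓ, X_comp, X_pow_comp,
      X_pow_mul_comp_X_pow_pow_div_gcd, comp_assoc]
end
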